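/- Let M = (A, Σ, δ, ρ) be a reversible Mealy automaton, let C be a connected component of M^n for some n ≥ 1, let u be a state of C and x ∈ A, and let D be the connected component of ux in M^{n+1}. Then: (i) for every state v of C there exists a state of D whose length-n prefix is v; (ii) if moreover y ∈ A with y ≠ x and uy is also a state of D, then for every state v of C there exist two distinct states of D with prefix v. In particular, the number of states of C divides the number of states of D. -/

import Mathlib

/-- Extended production function of a Mealy automaton: `mealyMap δ ρ x` is the
action of the state `x` on finite words over the alphabet. -/
def mealyMap {A S : Type*} (δ : S → A → A) (ρ : A → S → S) : A → List S → List S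
  | _, [] => []
  | x, i :: s => ρ x i :: mealyMap δ ρ (δ i x) s

/-- The semigroup generated by a Mealy automaton: the subsemigroup of maps
`Σ* → Σ*` (under composition) generated by the production functions. -/
def mealySemigroup {A S : Type*} (δ : S → A → A) (ρ : A → S → S) :
    Subsemigroup (Function.End (List S)) :=
  Subsemigroup.closure (Set.range fun x => (mealyMap δ ρ x : Function.End (List S)))

/-- The group generated by an invertible Mealy automaton: the subgroup of
permutations of `Σ*` generated by the production functions. -/
def mealyGroup {A S : Type*} (δ : S → A → A) (ρ : A → S → S) :
    Subgroup (Equiv.Perm (List S)) :=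
  Subgroup.closure {f : Equiv.Perm (List S) | ∃ x : A, ⇑f = mealyMap δ ρ x}

/-- A cycle in the automaton `(A, Σ, δ)`: pairwise distinct states
`states 0, …, states (n-1)` with transitions `states k —labels k→ states (k+1 mod n)`. -/
structure MealyCycle {A S : Type*} (δ : S → A → A) where
  n : ℕ
  npos : 0 < n
  states : Fin n → A
  labels : Fin n → S
  inj : Function.Injective states
  step : ∀ k : Fin n, δ (labels k) (states k) = states ⟨(k + 1) % n, Nat.mod_lt _ npos⟩

/-- The cycle has an external exit. -/
def HasExternalExit {A S : Type*} {δ : S → A → A} (C : MealyCycle δ) : Prop :=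
  ∃ (k : Fin C.n) (i : S), δ i (C.states k) ∉ Set.range C.states

/-- The cycle has an internal exit. -/
def HasInternalExit {A S : Type*} {δ : S → A → A} (C : MealyCycle δ) : Prop :=
  ∃ (k : Fin C.n) (i : S), δ i (C.states k) ∈ Set.range C.states ∧
    δ i (C.states k) ≠ δ (C.labels k) (C.states k)

/-- `v` is reachable from `u` in the automaton `(A, Σ, δ)`. -/
def Reachable {A S : Type*} (δ : S → A → A) (u v : A) : Prop :=
  ∃ s : List S, s.foldl (fun a i => δ i a) u = v

/-- Action of a word `s ∈ Σ*` on states of powers of the automaton (words over `A`),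
via the production functions of the dual automaton: `dualAct δ ρ s = δ_s`. -/
def dualAct {A S : Type*} (δ : S → A → A) (ρ : A → S → S) (s : List S) (u : List A) : List A :=
  s.foldl (fun w i => mealyMap ρ δ i w) u

/-- Two states of a power of a reversible Mealy automaton lie in the same
connected component iff some `δ_s` maps one to the other. -/
def sameComp {A S : Type*} (δ : S → A → A) (ρ : A → S → S) (u w : List A) : Prop :=
  ∃ s : List S, dualAct δ ρ s u = w


/-!
Each `δ_s` acts on words over `A` as a sequential map: it preserves length, commutes with
taking prefixes, and is injective when `M` is reversible. Hence `δ_s` maps `ux` to a word with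
prefix `δ_s u`, which gives (i), and maps the distinct words `ux`, `uy` to distinct words, which
gives (ii). On the finite set of words of length `n`, the injective map `δ_s` is periodic, so
reachability is symmetric. Consequently, if `δ_t` maps `v₁ ∈ C` to `v₂ ∈ C`, it injects the
fibre of the prefix map `D → C` over `v₁` into the fibre over `v₂`: all fibres have the same
size, and `#D = #C · (fibre size)`.
-/

open Set Function

theorem Set.ncard_eq_mul_of_ncard_fiber_eq {α β : Type*} {s : Set α} {t : Set β} {f : α → β}
    (hs : s.Finite) (ht : t.Finite) (hf : MapsTo f s t) {m : ℕ}
    (hfib : ∀ b ∈ t, (s ∩ f ⁻¹' {b}).ncard = m) : s.ncard = t.ncard * m := by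
  classical
  lift s to Finset α using hs
  lift t to Finset β using ht
  have hfib' : ∀ b ∈ t, (s.filter (f · = b)).card = m := fun b hb => by
    rw [← hfib b hb, ← Set.ncard_coe_finset, Finset.coe_filter]; rfl
  rw [Set.ncard_coe_finset, Set.ncard_coe_finset, Finset.card_eq_sum_card_fiberwise hf,
    Finset.sum_congr rfl hfib', Finset.sum_const, smul_eq_mul]

theorem Set.InjOn.exists_iterate_eq_self {α : Type*} {s : Set α} {f : α → α}
    (hinj : InjOn f s) (hs : s.Finite) (hf : MapsTo f s s) {x : α} (hx : x ∈ s) :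
    ∃ k > 0, f^[k] x = x := by
  have := hs.to_subtype
  obtain ⟨k, hk, hper⟩ := mem_periodicPts.mp
    (((hf.restrict_inj).mpr hinj).mem_periodicPts ⟨x, hx⟩)
  refine ⟨k, hk, ?_⟩
  rw [← hf.coe_iterate_restrict ⟨x, hx⟩ k]
  exact congrArg Subtype.val hper

section Mealy

variable {A S : Type*}

theorem mealyMap_length (δ : S → A → A) (ρ : A → S → S) (x : A) (s : List S) :
    (mealyMap δ ρ x s).length = s.length := by
  induction s generalizing x with
  | nil => rfl
  | cons i s ih => simp [mealyMap, ih]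

theorem mealyMap_take (δ : S → A → A) (ρ : A → S → S) (x : A) (s : List S) (k : ℕ) :
    mealyMap δ ρ x (s.take k) = (mealyMap δ ρ x s).take k := by
  induction s generalizing x k with
  | nil => simp [mealyMap]
  | cons i s ih => cases k <;> simp [mealyMap, ih]

theorem mealyMap_injective (δ : S → A → A) (ρ : A → S → S)
    (hρ : ∀ x : A, Injective (ρ x)) (x : A) : Injective (mealyMap δ ρ x) := by
  intro s t h
  induction s generalizing x t with
  | nil => cases t <;> simp_all [mealyMap]
  | cons i s ih =>
    cases t with
    | nil => simp [mealyMap] at h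
    | cons j t =>
      simp only [mealyMap, List.cons.injEq] at h
      obtain rfl : i = j := hρ x h.1
      exact congrArg (i :: ·) (ih (δ i x) h.2)

variable (δ : S → A → A) (ρ : A → S → S)

theorem dualAct_cons (i : S) (s : List S) (u : List A) :
    dualAct δ ρ (i :: s) u = dualAct δ ρ s (mealyMap ρ δ i u) :=
  rfl

theorem dualAct_append (s t : List S) (u : List A) :
    dualAct δ ρ (s ++ t) u = dualAct δ ρ t (dualAct δ ρ s u) :=
  List.foldl_append

theorem dualAct_flatten_replicate (s : List S) (m : ℕ) (u : List A) :
    dualAct δ ρ (List.replicate m s).flatten u = (dualAct δ ρ s)^[m] u := by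
  induction m generalizing u with
  | zero => rfl
  | succ m ih =>
    rw [List.replicate_succ, List.flatten_cons, dualAct_append, iterate_succ_apply, ih]

theorem dualAct_length (s : List S) (u : List A) : (dualAct δ ρ s u).length = u.length := by
  induction s generalizing u with
  | nil => rfl
  | cons i s ih => rw [dualAct_cons, ih, mealyMap_length]

theorem dualAct_take (s : List S) (u : List A) (k : ℕ) :
    dualAct δ ρ s (u.take k) = (dualAct δ ρ s u).take k := by
  induction s generalizing u with
  | nil => rfl
  | cons i s ih => rw [dualAct_cons, dualAct_cons, mealyMap_take, ih]

theorem dualAct_prefix_append (s : List S) (u w : List A) :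
    dualAct δ ρ s u <+: dualAct δ ρ s (u ++ w) := by
  rw [List.prefix_iff_eq_take, dualAct_length, ← dualAct_take, List.take_left]

theorem dualAct_injective (hrev : ∀ i : S, Bijective (δ i)) (s : List S) :
    Injective (dualAct δ ρ s) := by
  induction s with
  | nil => exact injective_id
  | cons i s ih => exact ih.comp (mealyMap_injective ρ δ (fun j => (hrev j).injective) i)

theorem sameComp_length {u w : List A} (h : sameComp δ ρ u w) : w.length = u.length := by
  obtain ⟨s, rfl⟩ := h
  exact dualAct_length δ ρ s u

theorem sameComp_trans {u v w : List A} (h₁ : sameComp δ ρ u v) (h₂ : sameComp δ ρ v w) :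
    sameComp δ ρ u w := by
  obtain ⟨s, rfl⟩ := h₁
  obtain ⟨t, rfl⟩ := h₂
  exact ⟨s ++ t, dualAct_append δ ρ s t u⟩

theorem finite_setOf_sameComp [Finite A] (u : List A) : {w | sameComp δ ρ u w}.Finite :=
  (List.finite_length_eq A u.length).subset fun _ => sameComp_length δ ρ

theorem sameComp_symm [Finite A] (hrev : ∀ i : S, Bijective (δ i)) {u v : List A}
    (h : sameComp δ ρ u v) : sameComp δ ρ v u := by
  obtain ⟨s, rfl⟩ := h
  obtain ⟨k, hk, hper⟩ := ((dualAct_injective δ ρ hrev s).injOn).exists_iterate_eq_self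
    (List.finite_length_eq A u.length) (fun w hw => (dualAct_length δ ρ s w).trans hw) rfl
  refine ⟨(List.replicate (k - 1) s).flatten, ?_⟩
  rw [dualAct_flatten_replicate, ← iterate_succ_apply, Nat.succ_eq_add_one,
    Nat.sub_one_add_one hk.ne', hper]

theorem ncard_sameComp_inter_take_preimage_le [Finite A] (hrev : ∀ i : S, Bijective (δ i))
    (w₀ : List A) (k : ℕ) {v₁ v₂ : List A} (h : sameComp δ ρ v₁ v₂) :
    ({w | sameComp δ ρ w₀ w} ∩ List.take k ⁻¹' {v₁}).ncard ≤
      ({w | sameComp δ ρ w₀ w} ∩ List.take k ⁻¹' {v₂}).ncard := by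
  obtain ⟨t, rfl⟩ := h
  refine ncard_le_ncard_of_injOn (dualAct δ ρ t) ?_ (dualAct_injective δ ρ hrev t).injOn
    ((finite_setOf_sameComp δ ρ w₀).inter_of_left _)
  rintro w ⟨hw, rfl⟩
  exact ⟨sameComp_trans δ ρ hw ⟨t, rfl⟩, (dualAct_take δ ρ t w k).symm⟩

end Mealy

theorem component_splitting_general
    {A S : Type*} [Fintype A]
    (δ : S → A → A) (ρ : A → S → S)
    (hrev : ∀ i : S, Function.Bijective (δ i))
    (u : List A) (x : A) :
    (∀ v : List A, sameComp δ ρ u v →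
        ∃ w : List A, sameComp δ ρ (u ++ [x]) w ∧ v <+: w)
    ∧ (∀ y : A, y ≠ x → sameComp δ ρ (u ++ [x]) (u ++ [y]) →
        ∀ v : List A, sameComp δ ρ u v →
          ∃ w₁ w₂ : List A, w₁ ≠ w₂ ∧ sameComp δ ρ (u ++ [x]) w₁ ∧
            sameComp δ ρ (u ++ [x]) w₂ ∧ v <+: w₁ ∧ v <+: w₂)
    ∧ Set.ncard {w | sameComp δ ρ u w} ∣ Set.ncard {w | sameComp δ ρ (u ++ [x]) w} := by
  refine ⟨?_, ?_, ?_⟩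
  · rintro v ⟨s, rfl⟩
    exact ⟨_, ⟨s, rfl⟩, dualAct_prefix_append δ ρ s u [x]⟩
  · rintro y hyx hxy v ⟨s, rfl⟩
    refine ⟨_, _, ?_, ⟨s, rfl⟩, sameComp_trans δ ρ hxy ⟨s, rfl⟩,
      dualAct_prefix_append δ ρ s u [x], dualAct_prefix_append δ ρ s u [y]⟩
    exact (dualAct_injective δ ρ hrev s).ne (by simpa using hyx.symm)
  · set D := {w | sameComp δ ρ (u ++ [x]) w}
    have hmaps : MapsTo (List.take u.length) D {w | sameComp δ ρ u w} := by
      rintro _ ⟨s, rfl⟩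
      exact ⟨s, by rw [← dualAct_take, List.take_left]⟩
    have hfib : ∀ v ∈ {w | sameComp δ ρ u w},
        (D ∩ List.take u.length ⁻¹' {v}).ncard = (D ∩ List.take u.length ⁻¹' {u}).ncard :=
      fun v hv => le_antisymm
        (ncard_sameComp_inter_take_preimage_le δ ρ hrev _ _ (sameComp_symm δ ρ hrev hv))
        (ncard_sameComp_inter_take_preimage_le δ ρ hrev _ _ hv)
    exact ⟨_, ncard_eq_mul_of_ncard_fiber_eq (finite_setOf_sameComp δ ρ _)
      (finite_setOf_sameComp δ ρ u) hmaps hfib⟩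

/-- let `M` be reversible, `C` the connected component of a state `u` of
`M^n` (`n ≥ 1`), `x ∈ A`, and `D` the connected component of `ux` in `M^(n+1)`.
(i) every state `v` of `C` is the length-`n` prefix of some state of `D`;
(ii) if `uy ∈ D` for some `y ≠ x`, every state `v` of `C` is the prefix of two distinct
states of `D`; and `#C` divides `#D`. -/
theorem component_splitting
    {A S : Type*} [Fintype A] [Fintype S]
    (δ : S → A → A) (ρ : A → S → S)
    (hrev : ∀ i : S, Function.Bijective (δ i))
    (n : ℕ) (hn : 1 ≤ n) (u : List A) (hu : u.length = n) (x : A) :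
    (∀ v : List A, sameComp δ ρ u v →
        ∃ w : List A, sameComp δ ρ (u ++ [x]) w ∧ v <+: w)
    ∧ (∀ y : A, y ≠ x → sameComp δ ρ (u ++ [x]) (u ++ [y]) →
        ∀ v : List A, sameComp δ ρ u v →
          ∃ w₁ w₂ : List A, w₁ ≠ w₂ ∧ sameComp δ ρ (u ++ [x]) w₁ ∧
            sameComp δ ρ (u ++ [x]) w₂ ∧ v <+: w₁ ∧ v <+: w₂)
    ∧ Set.ncard {w | sameComp δ ρ u w} ∣ Set.ncard {w | sameComp δ ρ (u ++ [x]) w} :=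
  component_splitting_general δ ρ hrev u x
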